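/- arXiv:0812.3204 — 5 statements merged into one kernel-verified Lean document; each statement's English description precedes it below -/
import Mathlib

section
/- If A is a normal subgroup of a finite group G and H is a π-Hall subgroup of G, then H ∩ A is a π-Hall subgroup of A. -/
/-! Since `A` is normal, `HA` is a subgroup and `|A : H ∩ A| = |HA : H|`, which divides
`|G : H|`; and `|H ∩ A|` divides `|H|`. So both conditions pass from `H` to `H ∩ A`. -/

/-- `H` is a π-Hall subgroup: every prime dividing `|H|` lies in `π` and
no prime dividing the index `|G : H|` lies in `π`. -/
def IsHall {G : Type*} [Group G] (π : Set ℕ) (H : Subgroup G) : Prop :=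
  (∀ p : ℕ, p.Prime → p ∣ Nat.card H → p ∈ π) ∧
  (∀ p : ℕ, p.Prime → p ∣ H.index → p ∉ π)

namespace Subgroup

variable {G : Type*} [Group G]

theorem card_subgroupOf_dvd_card (H K : Subgroup G) : Nat.card (H.subgroupOf K) ∣ Nat.card H := by
  rw [← card_map_of_injective K.subtype_injective, subgroupOf_map_subtype]
  exact card_dvd_of_le inf_le_left

theorem relIndex_sup_right_of_normal (H K : Subgroup G) [K.Normal] (hKH : K.relIndex H ≠ 0) :
    H.relIndex (H ⊔ K) = H.relIndex K := by
  have through_K : H.relIndex K * K.relIndex H = (H ⊓ K).relIndex (H ⊔ K) := by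
    rw [← inf_relIndex_right H K, ← relIndex_sup_right H K]
    exact relIndex_mul_relIndex _ _ _ inf_le_right le_sup_right
  have through_H : K.relIndex H * H.relIndex (H ⊔ K) = (H ⊓ K).relIndex (H ⊔ K) := by
    rw [← inf_relIndex_left H K]
    exact relIndex_mul_relIndex _ _ _ inf_le_left le_sup_left
  rw [mul_comm] at through_H
  exact Nat.eq_of_mul_eq_mul_right (Nat.pos_of_ne_zero hKH) (through_H.trans through_K.symm)

theorem relIndex_dvd_index_of_normal_right (H K : Subgroup G) [K.Normal]
    (hKH : K.relIndex H ≠ 0) : H.relIndex K ∣ H.index :=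
  relIndex_sup_right_of_normal H K hKH ▸ relIndex_dvd_index_of_le le_sup_left

end Subgroup

theorem stmt1 {G : Type*} [Group G] [Finite G] (π : Set ℕ) (A H : Subgroup G)
    (hA : A.Normal) (hH : IsHall π H) :
    IsHall π (H.subgroupOf A) := by
  obtain ⟨hcard, hindex⟩ := hH
  have hindex_dvd : H.relIndex A ∣ H.index :=
    H.relIndex_dvd_index_of_normal_right A Subgroup.FiniteIndex.index_ne_zero
  exact ⟨fun p hp hdvd => hcard p hp (hdvd.trans (H.card_subgroupOf_dvd_card A)),
    fun p hp hdvd => hindex p hp (hdvd.trans hindex_dvd)⟩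
end

section
/- If G is a finite group possessing a subnormal series {e} = G₀ ⊲ G₁ ⊲ ... ⊲ Gₙ = G in which every factor G_{i+1}/G_i is either a π-group or a π'-group, then G possesses a π-Hall subgroup. -/
/-!
Induction on `|G|`. The lowest nontrivial term of the series is a subnormal π- or π'-subgroup,
so it lies in `O_π(G)` or `O_π'(G)`, the largest normal π- resp. π'-subgroup; this gives a
nontrivial normal subgroup `N` that is a π- or a π'-group. The series descends to `G/N`, which has
a Hall π-subgroup `K` by induction. If `N` is a π-group, the preimage of `K` is a Hall
π-subgroup of `G`; if `N` is a π'-group, the orders of `N` and `K` are coprime and a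
Schur–Zassenhaus complement of `N` in the preimage of `K` is one.
-/

def IsPiNumber (π : Set ℕ) (n : ℕ) : Prop :=
  ∀ p : ℕ, p.Prime → p ∣ n → p ∈ π

namespace IsPiNumber

variable {π : Set ℕ} {m n : ℕ}

lemma one : IsPiNumber π 1 :=
  fun _ hp h => absurd (Nat.dvd_one.mp h) hp.ne_one

lemma of_dvd (hn : IsPiNumber π n) (hmn : m ∣ n) : IsPiNumber π m :=
  fun p hp hpm => hn p hp (hpm.trans hmn)

lemma mul (hm : IsPiNumber π m) (hn : IsPiNumber π n) : IsPiNumber π (m * n) :=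
  fun p hp h => (hp.dvd_mul.mp h).elim (hm p hp) (hn p hp)

lemma coprime (hm : IsPiNumber π m) (hn : IsPiNumber πᶜ n) : m.Coprime n :=
  Nat.coprime_of_dvd fun p hp hpm hpn => hn p hp hpn (hm p hp hpm)

end IsPiNumber

namespace Subgroup

variable {π : Set ℕ} {G : Type*} [Group G]

lemma card_subgroupOf_of_le {H K : Subgroup G} (h : H ≤ K) :
    Nat.card (H.subgroupOf K) = Nat.card H :=
  Nat.card_congr (subgroupOfEquivOfLe h).toEquiv

lemma card_mul_relIndex {H K : Subgroup G} (h : H ≤ K) :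
    Nat.card H * H.relIndex K = Nat.card K := by
  rw [← relIndex_bot_left, ← relIndex_bot_left, relIndex_mul_relIndex _ _ _ bot_le h]

lemma relIndex_map_map_dvd {G' : Type*} [Group G'] (f : G →* G') (H K : Subgroup G) :
    (H.map f).relIndex (K.map f) ∣ H.relIndex K := by
  rw [← relIndex_comap]
  exact relIndex_dvd_of_le_left K (le_comap_map f H)

lemma isPiNumber_card_sup {N M : Subgroup G} [N.Normal] (hN : IsPiNumber π (Nat.card N))
    (hM : IsPiNumber π (Nat.card M)) : IsPiNumber π (Nat.card ↥(N ⊔ M)) := by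
  rw [← card_mul_relIndex le_sup_left, relIndex_sup_left]
  exact hN.mul (hM.of_dvd (relIndex_dvd_card N M))

variable (π G) in
/-- `O_π(G)`, the largest normal π-subgroup when `G` is finite. -/
def piCore : Subgroup G :=
  sSup {N : Subgroup G | N.Normal ∧ IsPiNumber π (Nat.card N)}

lemma le_piCore {N : Subgroup G} (hN : N.Normal) (hπ : IsPiNumber π (Nat.card N)) :
    N ≤ piCore π G :=
  le_sSup ⟨hN, hπ⟩

lemma piCore_normal_and_isPiNumber [Finite G] :
    (piCore π G).Normal ∧ IsPiNumber π (Nat.card (piCore π G)) := by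
  suffices ∀ S : Set (Subgroup G), S.Finite → S ⊆ {N | N.Normal ∧ IsPiNumber π (Nat.card N)} →
      (sSup S).Normal ∧ IsPiNumber π (Nat.card (sSup S : Subgroup G)) from
    this _ (Set.toFinite _) subset_rfl
  intro S hS
  induction S, hS using Set.Finite.induction_on with
  | empty =>
    intro _
    rw [sSup_empty, card_bot]
    exact ⟨normal_bot, IsPiNumber.one⟩
  | @insert N S _ _ ih =>
    intro hsub
    obtain ⟨hN, hπ⟩ := hsub (Set.mem_insert N S)
    obtain ⟨hS, hSπ⟩ := ih ((Set.subset_insert N S).trans hsub)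
    rw [sSup_insert]
    exact ⟨sup_normal N _, isPiNumber_card_sup hπ hSπ⟩

instance [Finite G] : (piCore π G).Normal := piCore_normal_and_isPiNumber.1

lemma isPiNumber_card_piCore [Finite G] : IsPiNumber π (Nat.card (piCore π G)) :=
  piCore_normal_and_isPiNumber.2

instance : (piCore π G).Characteristic := by
  refine characteristic_iff_map_le.mpr fun φ => map_le_iff_le_comap.mpr <|
    sSup_le fun N ⟨hN, hπ⟩ => map_le_iff_le_comap.mp <| le_piCore (hN.map _ φ.surjective) ?_
  rwa [card_map_of_injective φ.injective]

/-- `H` lies in a proper normal subgroup `K`; by induction `H ≤ O_π(K)`, and `O_π(K)` is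
characteristic in `K`, hence normal in `G`. -/
lemma IsSubnormal.le_piCore [Finite G] {H : Subgroup G} (hH : H.IsSubnormal)
    (hπ : IsPiNumber π (Nat.card H)) : H ≤ piCore π G := by
  induction h : Nat.card G using Nat.strong_induction_on generalizing G with
  | _ m ih =>
  obtain rfl | ⟨K, hK, hHK, hKtop⟩ := hH.lt_normal
  · exact Subgroup.le_piCore normal_top hπ
  have hcard : Nat.card K < m :=
    h ▸ lt_of_le_of_ne (card_le_card_group K) (mt (eq_top_of_card_eq K) hKtop.ne)
  have hle := ih _ hcard hH.subgroupOf (by rwa [card_subgroupOf_of_le hHK]) rfl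
  calc H = (H.subgroupOf K).map K.subtype := (map_subgroupOf_eq_of_le hHK).symm
    _ ≤ (piCore π K).map K.subtype := map_mono hle
    _ ≤ piCore π G := Subgroup.le_piCore inferInstance <| by
        rw [card_map_of_injective K.subtype_injective]; exact isPiNumber_card_piCore

end Subgroup

section

open Subgroup

variable {π : Set ℕ} {G : Type*} [Group G]

lemma isHall_iff {H : Subgroup G} :
    IsHall π H ↔ IsPiNumber π (Nat.card H) ∧ IsPiNumber πᶜ H.index :=
  Iff.rfl

lemma isHall_bot_of_subsingleton [Subsingleton G] : IsHall π (⊥ : Subgroup G) := by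
  rw [isHall_iff, card_bot, index_bot, Nat.card_unique]
  exact ⟨IsPiNumber.one, IsPiNumber.one⟩

section Quotient

variable {N : Subgroup G} [N.Normal] {K : Subgroup (G ⧸ N)}

lemma relIndex_comap_mk' : N.relIndex (K.comap (QuotientGroup.mk' N)) = Nat.card K := by
  have h := relIndex_ker (K := K.comap (QuotientGroup.mk' N)) (QuotientGroup.mk' N)
  rwa [QuotientGroup.ker_mk', map_comap_eq_self_of_surjective (QuotientGroup.mk'_surjective N)] at h

lemma le_comap_mk' : N ≤ K.comap (QuotientGroup.mk' N) :=
  (QuotientGroup.ker_mk' N).ge.trans (MonoidHom.ker_le_comap _ K)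

lemma IsHall.comap_mk' (hN : IsPiNumber π (Nat.card N)) (hK : IsHall π K) :
    IsHall π (K.comap (QuotientGroup.mk' N)) := by
  rw [isHall_iff, ← card_mul_relIndex le_comap_mk', relIndex_comap_mk',
    index_comap_of_surjective _ (QuotientGroup.mk'_surjective N)]
  exact ⟨hN.mul hK.1, hK.2⟩

lemma IsHall.exists_lift_of_isPiNumber_compl (hN : IsPiNumber πᶜ (Nat.card N))
    (hK : IsHall π K) : ∃ H : Subgroup G, IsHall π H := by
  obtain ⟨hKcard, hKindex⟩ := isHall_iff.mp hK
  set L := K.comap (QuotientGroup.mk' N)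
  have hcard : Nat.card (N.subgroupOf L) = Nat.card N := card_subgroupOf_of_le le_comap_mk'
  have hindex : (N.subgroupOf L).index = Nat.card K := relIndex_comap_mk'
  obtain ⟨C, hC⟩ := exists_left_complement'_of_coprime
    (hcard ▸ hindex ▸ (hKcard.coprime hN).symm)
  refine ⟨C.map L.subtype, ?_, ?_⟩
  · rw [card_map_of_injective L.subtype_injective, ← hC.index_eq_card, hindex]
    exact hKcard
  · rw [index_map_subtype, hC.symm.index_eq_card, hcard,
      index_comap_of_surjective _ (QuotientGroup.mk'_surjective N)]
    exact hN.mul hKindex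

end Quotient

structure IsPiSeparableSeries (π : Set ℕ) {n : ℕ} (c : Fin (n + 1) → Subgroup G) : Prop where
  bot : c 0 = ⊥
  top : c (Fin.last n) = ⊤
  le : ∀ i : Fin n, c i.castSucc ≤ c i.succ
  normal : ∀ i : Fin n, ((c i.castSucc).subgroupOf (c i.succ)).Normal
  factor : ∀ i : Fin n, IsPiNumber π ((c i.castSucc).relIndex (c i.succ)) ∨
    IsPiNumber πᶜ ((c i.castSucc).relIndex (c i.succ))

namespace IsPiSeparableSeries

variable {n : ℕ} {c : Fin (n + 1) → Subgroup G}

lemma isSubnormal (hc : IsPiSeparableSeries π c) (i : Fin (n + 1)) : (c i).IsSubnormal := by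
  induction i using Fin.reverseInduction with
  | last => rw [hc.top]; exact .top
  | cast i ih => exact .step _ _ (hc.le i) ih (hc.normal i)

lemma map {G' : Type*} [Group G'] (hc : IsPiSeparableSeries π c) {f : G →* G'}
    (hf : Function.Surjective f) : IsPiSeparableSeries π fun i => (c i).map f where
  bot := by rw [hc.bot, Subgroup.map_bot]
  top := by rw [hc.top, map_top_of_surjective f hf]
  le i := map_mono (hc.le i)
  normal i := by
    have hnorm := (normal_subgroupOf_iff_le_normalizer (hc.le i)).mp (hc.normal i)
    exact normal_subgroupOf_of_le_normalizer ((map_mono hnorm).trans (le_normalizer_map f))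
  factor i := (hc.factor i).imp (·.of_dvd (relIndex_map_map_dvd f _ _))
    (·.of_dvd (relIndex_map_map_dvd f _ _))

lemma exists_normal_ne_bot [Finite G] [Nontrivial G] (hc : IsPiSeparableSeries π c) :
    ∃ N : Subgroup G, N.Normal ∧ N ≠ ⊥ ∧
      (IsPiNumber π (Nat.card N) ∨ IsPiNumber πᶜ (Nat.card N)) := by
  obtain ⟨i, hi, hne⟩ : ∃ i : Fin n, c i.castSucc = ⊥ ∧ c i.succ ≠ ⊥ := by
    by_contra! h
    have hbot : ∀ i, c i = ⊥ := fun i => by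
      induction i using Fin.induction with
      | zero => exact hc.bot
      | succ i ih => exact h i ih
    exact bot_ne_top ((hbot _).symm.trans hc.top)
  have hcard : (c i.castSucc).relIndex (c i.succ) = Nat.card (c i.succ) := by
    rw [hi, relIndex_bot_left]
  have hsub := hc.isSubnormal i.succ
  rcases hc.factor i with hπ | hπ <;> rw [hcard] at hπ
  · exact ⟨piCore π G, inferInstance, ne_bot_of_le_ne_bot hne (hsub.le_piCore hπ),
      Or.inl isPiNumber_card_piCore⟩
  · exact ⟨piCore πᶜ G, inferInstance, ne_bot_of_le_ne_bot hne (hsub.le_piCore hπ),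
      Or.inr isPiNumber_card_piCore⟩

theorem exists_isHall [Finite G] (hc : IsPiSeparableSeries π c) :
    ∃ H : Subgroup G, IsHall π H := by
  induction h : Nat.card G using Nat.strong_induction_on generalizing G n with
  | _ m ih =>
  obtain _ | _ := subsingleton_or_nontrivial G
  · exact ⟨⊥, isHall_bot_of_subsingleton⟩
  obtain ⟨N, hN, hNbot, hNπ⟩ := hc.exists_normal_ne_bot
  have hlt : Nat.card (G ⧸ N) < m := by
    rw [← h, ← index_eq_card, ← index_bot]
    exact index_strictAnti (bot_lt_iff_ne_bot.mpr hNbot)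
  obtain ⟨K, hK⟩ := ih _ hlt (hc.map (QuotientGroup.mk'_surjective N)) rfl
  rcases hNπ with hNπ | hNπ
  · exact ⟨_, hK.comap_mk' hNπ⟩
  · exact hK.exists_lift_of_isPiNumber_compl hNπ

end IsPiSeparableSeries

end

/-- If `G` has a subnormal series `{e} = G₀ ⊲ G₁ ⊲ ... ⊲ Gₙ = G` in which every
factor is either a π-group or a π'-group, then `G` has a π-Hall subgroup. -/
theorem stmt2 {G : Type*} [Group G] [Finite G] (π : Set ℕ) (n : ℕ)
    (c : Fin (n + 1) → Subgroup G)
    (h0 : c 0 = ⊥) (hn : c (Fin.last n) = ⊤)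
    (hle : ∀ i : Fin n, c i.castSucc ≤ c i.succ)
    (hnorm : ∀ i : Fin n, ((c i.castSucc).subgroupOf (c i.succ)).Normal)
    (hfac : ∀ i : Fin n,
      (∀ p : ℕ, p.Prime → p ∣ (c i.castSucc).relIndex (c i.succ) → p ∈ π) ∨
      (∀ p : ℕ, p.Prime → p ∣ (c i.castSucc).relIndex (c i.succ) → p ∉ π)) :
    ∃ H : Subgroup G, IsHall π H :=
  IsPiSeparableSeries.exists_isHall ⟨h0, hn, hle, hnorm, hfac⟩
end

section
/- For any prime p ≥ 5, in the symmetric group S_p, the stabilizer H of the point p (isomorphic to S_{p-1}) is a p'-Hall subgroup, and the intersection of any p−2 conjugates of H is nontrivial. -/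
def conjS {G : Type*} [Group G] (g : G) (H : Subgroup G) : Subgroup G :=
  H.map (MulAut.conj g⁻¹).toMonoidHom

/-- For a prime `p ≥ 5`, the stabilizer `H ≅ S_{p-1}` of the point `p`
(the last point of `Fin p`) in `S_p` is a p'-Hall subgroup (order coprime
to `p`, index a power of `p`), and the intersection of any `p - 2`
conjugates of `H` is nontrivial. -/
theorem stmt5 (p : ℕ) (hp : p.Prime) (hp5 : 5 ≤ p)
    (H : Subgroup (Equiv.Perm (Fin p)))
    (hH : H = MulAction.stabilizer (Equiv.Perm (Fin p)) (⟨p - 1, by omega⟩ : Fin p)) :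
    (¬ p ∣ Nat.card H) ∧ (∃ k : ℕ, H.index = p ^ k) ∧
    (∀ x : Fin (p - 2) → Equiv.Perm (Fin p), (⨅ i, conjS (x i) H) ≠ ⊥) := by
  set a : Fin p := ⟨p - 1, by omega⟩ with ha
  have htrans : MulAction.IsPretransitive (Equiv.Perm (Fin p)) (Fin p) :=
    ⟨fun c d => ⟨Equiv.swap c d, Equiv.swap_apply_left c d⟩⟩
  have hidx : H.index = p := by
    rw [hH, MulAction.index_stabilizer_of_transitive, Nat.card_eq_fintype_card,
      Fintype.card_fin]
  have hcardG : Nat.card (Equiv.Perm (Fin p)) = p.factorial := by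
    rw [Nat.card_eq_fintype_card, Fintype.card_perm, Fintype.card_fin]
  have hcardH : Nat.card H = (p - 1).factorial := by
    have h1 : Nat.card H * H.index = Nat.card (Equiv.Perm (Fin p)) :=
      Subgroup.card_mul_index H
    rw [hidx, hcardG] at h1
    have h2 : p.factorial = (p - 1).factorial * p := by
      rw [mul_comm, Nat.mul_factorial_pred (by omega)]
    rw [h2] at h1
    exact Nat.eq_of_mul_eq_mul_right (by omega) h1
  refine ⟨?_, ⟨1, by simpa using hidx⟩, ?_⟩
  · rw [hcardH]
    intro hdvd
    have := (Nat.Prime.dvd_factorial hp).mp hdvd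
    omega
  · intro x hbot
    set b : Fin (p - 2) → Fin p := fun i => (x i)⁻¹ a with hb
    have hcard : (Finset.univ.image b).card ≤ p - 2 :=
      le_trans (Finset.card_image_le) (by simp)
    have hcompl : 1 < (Finset.univ.image b)ᶜ.card := by
      have := Finset.card_compl (Finset.univ.image b)
      rw [this, Fintype.card_fin]; omega
    obtain ⟨c, hc, d, hd, hcd⟩ := Finset.one_lt_card.mp hcompl
    rw [Finset.mem_compl] at hc hd
    have hmem : Equiv.swap c d ∈ ⨅ i, conjS (x i) H := by
      rw [Subgroup.mem_iInf]
      intro i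
      refine ⟨(x i) * Equiv.swap c d * (x i)⁻¹, ?_, ?_⟩
      · simp only [hH, SetLike.mem_coe, MulAction.mem_stabilizer_iff, Equiv.Perm.smul_def]
        have hbc : b i ≠ c := fun h => hc (by rw [← h]; exact Finset.mem_image_of_mem b (Finset.mem_univ i))
        have hbd : b i ≠ d := fun h => hd (by rw [← h]; exact Finset.mem_image_of_mem b (Finset.mem_univ i))
        show (x i * Equiv.swap c d * (x i)⁻¹) a = a
        simp only [Equiv.Perm.mul_apply]
        rw [show (x i)⁻¹ a = b i from rfl, Equiv.swap_apply_of_ne_of_ne hbc hbd]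
        simp [hb]
      · simp only [MulEquiv.coe_toMonoidHom, MulAut.conj_apply]
        group
    rw [hbot, Subgroup.mem_bot] at hmem
    have : Equiv.swap c d c = c := by rw [hmem]; rfl
    rw [Equiv.swap_apply_left] at this
    exact hcd this.symm
end

section
/- In the symmetric group S₈, let H = ⟨(1 2 3 4), (1 2), (1 5)(2 6)(3 7)(4 8)⟩ ≅ S₄ ≀ S₂. Then for every choice of x, y, z ∈ S₈, the intersection H ∩ H^x ∩ H^y ∩ H^z is nontrivial. -/
open Equiv Equiv.Perm Subgroup Finset

section PartitionStabilizer

variable {α ι : Type*}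

def partitionStabilizer (B : Set α) : Subgroup (Perm α) where
  carrier := {g | (∀ x, g x ∈ B ↔ x ∈ B) ∨ ∀ x, g x ∈ B ↔ x ∉ B}
  one_mem' := Or.inl fun _ => Iff.rfl
  mul_mem' := by
    rintro a b (ha | ha) (hb | hb)
    · exact Or.inl fun x => (ha _).trans (hb x)
    · exact Or.inr fun x => (ha _).trans (hb x)
    · exact Or.inr fun x => (ha _).trans (not_congr (hb x))
    · exact Or.inl fun x => (ha _).trans ((not_congr (hb x)).trans not_not)
  inv_mem' := by
    rintro g (hg | hg)
    · exact Or.inl fun x => by simpa using (hg (g⁻¹ x)).symm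
    · exact Or.inr fun x => by simpa using (not_congr (hg (g⁻¹ x))).symm

theorem mem_partitionStabilizer {B : Set α} {g : Perm α} :
    g ∈ partitionStabilizer B ↔ (∀ x, g x ∈ B ↔ x ∈ B) ∨ ∀ x, g x ∈ B ↔ x ∉ B :=
  Iff.rfl

theorem mem_conjS {G : Type*} [Group G] {w g : G} {H : Subgroup G} :
    g ∈ conjS w H ↔ w * g * w⁻¹ ∈ H := by
  rw [conjS, Subgroup.mem_map_equiv, MulAut.conj_symm_apply, inv_inv]

theorem conjS_partitionStabilizer (w : Perm α) (B : Set α) :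
    conjS w (partitionStabilizer B) = partitionStabilizer (w ⁻¹' B) := by
  ext g
  simp only [mem_conjS, mem_partitionStabilizer, Perm.mul_apply, Set.mem_preimage]
  refine or_congr ?_ ?_ <;> exact w.forall_congr_right.symm.trans (by simp)

end PartitionStabilizer

section SwapGeneration

variable {α : Type*} [DecidableEq α]

theorem Subgroup.mem_of_forall_swap_apply_mem [Finite α] {K : Subgroup (Perm α)} {g : Perm α}
    (h : ∀ x, swap x (g x) ∈ K) : g ∈ K := by
  let S : Set (Perm α) := {σ | σ ∈ K ∧ σ.IsSwap}
  have hS : ∀ σ ∈ S, σ.IsSwap := fun _ hσ => hσ.2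
  refine (closure_le K).2 (fun _ hσ => hσ.1)
    ((mem_closure_isSwap hS).2 ⟨Set.toFinite _, fun x => ?_⟩)
  by_cases hx : g x = x
  · rw [hx]
    exact MulAction.mem_orbit_self x
  · exact ⟨⟨swap x (g x), subset_closure ⟨h x, x, g x, Ne.symm hx, rfl⟩⟩, swap_apply_left x (g x)⟩

theorem Subgroup.swap_apply_mem {K : Subgroup (Perm α)} {g : Perm α} (hg : g ∈ K) {a b : α}
    (hab : swap a b ∈ K) : swap (g a) (g b) ∈ K := by
  rw [swap_apply_apply]
  exact mul_mem (mul_mem hg hab) (inv_mem hg)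

theorem Subgroup.swap_pow_apply_mem {K : Subgroup (Perm α)} {g : Perm α} (hg : g ∈ K) {a : α}
    (ha : swap a (g a) ∈ K) (k : ℕ) : swap a ((g ^ k) a) ∈ K := by
  induction k with
  | zero => exact (swap_self a).symm ▸ K.one_mem
  | succ k ih =>
    have step := Subgroup.swap_apply_mem (pow_mem hg k) ha
    rw [← Perm.mul_apply, ← pow_succ] at step
    exact SubmonoidClass.swap_mem_trans K ih step

end SwapGeneration

section WreathProduct

def firstBlock : Set (Fin 8) := {x | (x : ℕ) < 4}

def fourCycle : Perm (Fin 8) := swap 0 1 * swap 1 2 * swap 2 3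

def blockSwap : Perm (Fin 8) := swap 0 4 * swap 1 5 * swap 2 6 * swap 3 7

local notation "W" => closure {fourCycle, swap 0 1, blockSwap}

theorem fourCycle_mem : fourCycle ∈ W := subset_closure (by simp)

theorem swap_zero_one_mem : swap 0 1 ∈ W := subset_closure (by simp)

theorem blockSwap_mem : blockSwap ∈ W := subset_closure (by simp)

theorem blockSwap_mem_firstBlock_iff (x : Fin 8) : blockSwap x ∈ firstBlock ↔ x ∉ firstBlock := by
  revert x
  simp only [firstBlock, Set.mem_ofPred_eq]
  decide

theorem swap_mem_of_mem_firstBlock {a b : Fin 8} (ha : a ∈ firstBlock) (hb : b ∈ firstBlock) :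
    swap a b ∈ W := by
  have orbit : ∀ a ∈ firstBlock, ∃ k : Fin 4, (fourCycle ^ (k : ℕ)) 0 = a := by
    simp only [firstBlock, Set.mem_ofPred_eq]
    decide
  have from_zero : ∀ a ∈ firstBlock, swap 0 a ∈ W := fun a ha => by
    obtain ⟨k, rfl⟩ := orbit a ha
    exact Subgroup.swap_pow_apply_mem fourCycle_mem swap_zero_one_mem k
  exact SubmonoidClass.swap_mem_trans W (swap_comm a 0 ▸ from_zero a ha) (from_zero b hb)

theorem swap_mem_of_mem_firstBlock_iff {a b : Fin 8} (hab : a ∈ firstBlock ↔ b ∈ firstBlock) :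
    swap a b ∈ W := by
  by_cases ha : a ∈ firstBlock
  · exact swap_mem_of_mem_firstBlock ha (hab.1 ha)
  · have hb : b ∉ firstBlock := mt hab.2 ha
    have involutive : ∀ x, blockSwap (blockSwap x) = x := by decide
    rw [← involutive a, ← involutive b]
    exact Subgroup.swap_apply_mem blockSwap_mem <| swap_mem_of_mem_firstBlock
      ((blockSwap_mem_firstBlock_iff a).2 ha) ((blockSwap_mem_firstBlock_iff b).2 hb)

theorem closure_eq_partitionStabilizer_firstBlock :
    W = partitionStabilizer firstBlock := by
  refine le_antisymm ((closure_le _).2 ?_) fun g hg => ?_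
  · simp only [Set.insert_subset_iff, Set.singleton_subset_iff, SetLike.mem_coe,
      mem_partitionStabilizer, firstBlock, Set.mem_ofPred_eq]
    decide
  · have preserving : ∀ {g : Perm (Fin 8)}, (∀ x, g x ∈ firstBlock ↔ x ∈ firstBlock) → g ∈ W :=
      fun hg => Subgroup.mem_of_forall_swap_apply_mem fun x =>
        swap_mem_of_mem_firstBlock_iff (hg x).symm
    rcases hg with hg | hg
    · exact preserving hg
    · refine (mul_mem_cancel_left blockSwap_mem).1 (preserving fun x => ?_)
      rw [Perm.mul_apply, blockSwap_mem_firstBlock_iff, hg, not_not]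

end WreathProduct

section Signature

variable {α ι : Type*}

noncomputable def signature (B : ι → Set α) (x : α) : ι → ZMod 2 := fun i => (B i).indicator 1 x

theorem signature_eq_one_iff {B : ι → Set α} {x : α} {i : ι} : signature B x i = 1 ↔ x ∈ B i :=
  Set.indicator_eq_one_iff_mem (ZMod 2)

theorem mem_partitionStabilizer_of_signature_apply {B : ι → Set α} {g : Perm α} {ε : ι → ZMod 2}
    (h : ∀ x, signature B (g x) = signature B x + ε) (i : ι) : g ∈ partitionStabilizer (B i) := by
  have hi : ∀ x, (g x ∈ B i ↔ signature B x i + ε i = 1) := fun x => by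
    rw [← signature_eq_one_iff, h x, Pi.add_apply]
  have translation : ∀ e : ZMod 2, (∀ t, t + e = 1 ↔ t = 1) ∨ ∀ t, t + e = 1 ↔ t ≠ 1 := by decide
  rcases translation (ε i) with he | he
  · exact Or.inl fun x => (hi x).trans ((he _).trans signature_eq_one_iff)
  · exact Or.inr fun x => (hi x).trans ((he _).trans (not_congr signature_eq_one_iff))

theorem exists_perm_signature_apply [Finite α] {V : Type*} [AddRightCancelSemigroup V]
    {σ : α → V} (hσ : σ.Injective) {ε : V} (h : ∀ x, ∃ y, σ y = σ x + ε) :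
    ∃ g : Perm α, ∀ x, σ (g x) = σ x + ε := by
  choose f hf using h
  have hf_inj : f.Injective := fun x y hxy => hσ (add_right_cancel (by rw [← hf, ← hf, hxy]))
  exact ⟨Equiv.ofBijective f (Finite.injective_iff_bijective.1 hf_inj), hf⟩

end Signature

-- Checked over all 8-subsets of `𝔽₂⁴`. Conceptually, `S` is the support of a 1-resilient Boolean
-- function of four variables, which is quadratic (Siegenthaler) and not bent, hence has a period.
set_option maxRecDepth 100000 in
theorem exists_ne_zero_forall_add_mem (S : Finset (Fin 4 → ZMod 2)) (hS : S.card = 8)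
    (hbalanced : ∀ i, (S.filter (· i = 1)).card = 4) : ∃ ε ≠ 0, ∀ s ∈ S, s + ε ∈ S := by
  have key : ∀ S ∈ (univ : Finset (Fin 4 → ZMod 2)).powersetCard 8,
      (∀ i, (S.filter (· i = 1)).card = 4) → ∃ ε ≠ 0, ∀ s ∈ S, s + ε ∈ S := by
    decide +kernel
  exact key S (mem_powersetCard.2 ⟨subset_univ S, hS⟩) hbalanced

theorem exists_ne_one_forall_mem_partitionStabilizer {α : Type*} [Fintype α]
    (hα : Fintype.card α = 8) (B : Fin 4 → Set α) (hB : ∀ i, (B i).ncard = 4) :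
    ∃ g : Perm α, g ≠ 1 ∧ ∀ i, g ∈ partitionStabilizer (B i) := by
  classical
  by_cases hσ : (signature B).Injective
  · let S := univ.image (signature B)
    have hS : S.card = 8 := by rw [card_image_of_injective _ hσ, card_univ, hα]
    have hbalanced : ∀ i, (S.filter (· i = 1)).card = 4 := fun i => by
      rw [filter_image, card_image_of_injective _ hσ]
      simpa [signature_eq_one_iff, Set.ncard_eq_toFinset_card'] using hB i
    obtain ⟨ε, hε, hεS⟩ := exists_ne_zero_forall_add_mem S hS hbalanced
    obtain ⟨g, hg⟩ := exists_perm_signature_apply hσ fun x => by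
      simpa [S] using hεS _ (mem_image_of_mem _ (mem_univ x))
    refine ⟨g, fun h1 => hε ?_, mem_partitionStabilizer_of_signature_apply hg⟩
    obtain ⟨x⟩ : Nonempty α := Fintype.card_pos_iff.1 (by omega)
    simpa [h1] using hg x
  · obtain ⟨x, y, hxy, hne⟩ : ∃ x y, signature B x = signature B y ∧ x ≠ y := by
      simpa [Function.Injective] using hσ
    refine ⟨swap x y, swap_eq_one_iff.not.2 hne,
      mem_partitionStabilizer_of_signature_apply (ε := 0) fun z => ?_⟩
    rw [add_zero]
    rcases eq_or_ne z x with rfl | hzx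
    · rw [swap_apply_left, hxy]
    rcases eq_or_ne z y with rfl | hzy
    · rw [swap_apply_right, hxy]
    · rw [swap_apply_of_ne_of_ne hzx hzy]

/-- In `S₈`, with `H = ⟨(1 2 3 4), (1 2), (1 5)(2 6)(3 7)(4 8)⟩ ≅ S₄ ≀ S₂`
(letters shifted by one), for every `x, y, z` the intersection
`H ∩ H^x ∩ H^y ∩ H^z` is nontrivial. -/
theorem stmt9 (H : Subgroup (Equiv.Perm (Fin 8)))
    (hH : H = Subgroup.closure
      { Equiv.swap 0 1 * Equiv.swap 1 2 * Equiv.swap 2 3,   -- (1 2 3 4)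
        Equiv.swap 0 1,                                     -- (1 2)
        Equiv.swap 0 4 * Equiv.swap 1 5 * Equiv.swap 2 6 * Equiv.swap 3 7 }) :
    ∀ x y z : Equiv.Perm (Fin 8),
      H ⊓ conjS x H ⊓ conjS y H ⊓ conjS z H ≠ ⊥ := by
  intro x y z
  have hcard : ∀ w : Perm (Fin 8), (w ⁻¹' firstBlock).ncard = 4 := fun w => by
    rw [Set.ncard_preimage_of_injective_subset_range w.injective (by simp), firstBlock,
      Set.ncard_eq_toFinset_card']
    rfl
  obtain ⟨g, hg1, hg⟩ := exists_ne_one_forall_mem_partitionStabilizer (Fintype.card_fin 8)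
    ![firstBlock, x ⁻¹' firstBlock, y ⁻¹' firstBlock, z ⁻¹' firstBlock]
    (fun i => by fin_cases i; exacts [hcard 1, hcard x, hcard y, hcard z])
  rw [hH.trans closure_eq_partitionStabilizer_firstBlock, conjS_partitionStabilizer,
    conjS_partitionStabilizer, conjS_partitionStabilizer]
  exact ne_bot_iff_exists_ne_one.2
    ⟨⟨g, mem_inf.2 ⟨mem_inf.2 ⟨mem_inf.2 ⟨hg 0, hg 1⟩, hg 2⟩, hg 3⟩⟩, by simpa using hg1⟩
end

section
/- Let G = P ⋊ R be a finite group where P is a normal Sylow p-subgroup of G and R is an abelian p'-Hall subgroup with C_R(P) = {e}. Then there exists x ∈ P such that R ∩ R^x = {e}. -/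
open Subgroup MulAction

namespace Subgroup

variable {A V : Type*} [Group A] [CommGroup V] [MulDistribMulAction A V]

def normHom (D : Subgroup A) [Fintype D] : V →* V where
  toFun w := ∏ d : D, (d : A) • w
  map_one' := by simp
  map_mul' v w := by simp [Finset.prod_mul_distrib]

variable {D : Subgroup A} [Fintype D]

lemma normHom_apply (w : V) : D.normHom w = ∏ d : D, (d : A) • w := rfl

lemma smul_normHom {a : A} (ha : a ∈ D) (w : V) : a • D.normHom w = D.normHom w := by
  rw [normHom_apply, Finset.smul_prod']
  exact Fintype.prod_equiv (Equiv.mulLeft ⟨a, ha⟩) _ _ fun d => by simp [mul_smul]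

lemma normHom_eq_pow {w : V} (hw : ∀ d ∈ D, d • w = w) : D.normHom w = w ^ Nat.card D := by
  simp [normHom_apply, fun d : D => hw d d.2, Nat.card_eq_fintype_card]

lemma normHom_smul [IsMulCommutative A] (a : A) (w : V) :
    D.normHom (a • w) = a • D.normHom w := by
  simp_rw [normHom_apply, Finset.smul_prod', smul_smul, mul_comm' a]

lemma eq_one_of_normHom_eq_one (hD : (Nat.card D).Coprime (Nat.card V)) {w : V}
    (hw : ∀ d ∈ D, d • w = w) (h : D.normHom w = 1) : w = 1 := by
  rw [normHom_eq_pow hw, ← orderOf_dvd_iff_pow_eq_one] at h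
  exact orderOf_eq_one_iff.mp <|
    (hD.coprime_dvd_left h).eq_one_of_dvd (_root_.orderOf_dvd_natCard w)

lemma smul_eq_self_of_normHom_injective [Finite V] (h : Function.Injective (D.normHom : V →* V))
    {d : A} (hd : d ∈ D) (w : V) : d • w = w := by
  obtain ⟨u, rfl⟩ := Finite.injective_iff_surjective.mp h w
  exact smul_normHom hd u

end Subgroup

namespace MulDistribMulAction

variable {A V : Type*} [Group A] [IsMulCommutative A] [Finite A] [CommGroup V] [Finite V]
  [MulDistribMulAction A V]

lemma exists_stabilizer_mul_lt (hco : (Nat.card A).Coprime (Nat.card V)) {v w : V}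
    (hvw : ¬ stabilizer A v ≤ stabilizer A w) :
    ∃ u : V, stabilizer A (v * u) < stabilizer A v := by
  set D := stabilizer A v
  have := Fintype.ofFinite D
  have hD : (Nat.card D).Coprime (Nat.card V) := hco.coprime_dvd_left (card_subgroup_dvd_card D)
  obtain ⟨d, hd, hdw⟩ := SetLike.not_le_iff_exists.mp hvw
  obtain ⟨u, hu, hu1⟩ : ∃ u : V, D.normHom u = 1 ∧ u ≠ 1 := by
    by_contra! h
    exact hdw (smul_eq_self_of_normHom_injective ((injective_iff_map_eq_one _).2 h) hd w)
  obtain ⟨d', hd', hd'u⟩ : ∃ d' ∈ D, d' • u ≠ u := by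
    by_contra! h
    exact hu1 (eq_one_of_normHom_eq_one hD h hu)
  have hfix : ∀ s ∈ stabilizer A (v * u), s • v = v ∧ s • u = u := by
    intro s hs
    rw [mem_stabilizer_iff, smul_mul'] at hs
    -- the left side lies in `C_V(D)`, the right side in `ker N_D`
    have hsplit : s • v / v = u / s • u := by
      rw [← mul_div_mul_right_eq_div _ _ (s • u), hs, mul_div_mul_left_eq_div]
    have hz : s • v / v = 1 := by
      refine eq_one_of_normHom_eq_one hD (fun e he => ?_) ?_
      · rw [smul_div', smul_smul, mul_comm' e, ← smul_smul,
          (mem_stabilizer_iff.mp he : e • v = v)]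
      · rw [hsplit, map_div, normHom_smul, hu, smul_one, div_one]
    refine ⟨div_eq_one.mp hz, ?_⟩
    rw [hsplit, div_eq_one] at hz
    exact hz.symm
  refine ⟨u, SetLike.lt_iff_le_and_exists.mpr ⟨fun s hs => (hfix s hs).1, d', hd', ?_⟩⟩
  exact fun h => hd'u (hfix d' h).2

theorem exists_forall_stabilizer_le (hco : (Nat.card A).Coprime (Nat.card V)) :
    ∃ v : V, ∀ w : V, stabilizer A v ≤ stabilizer A w := by
  obtain ⟨v, -, hmin⟩ :=
    exists_minimalFor_of_wellFoundedLT (fun _ : V => True) (stabilizer A) ⟨1, trivial⟩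
  refine ⟨v, fun w => ?_⟩
  by_contra hvw
  obtain ⟨u, hlt⟩ := exists_stabilizer_mul_lt hco hvw
  exact hlt.not_ge (hmin trivial hlt.le)

end MulDistribMulAction

lemma QuotientGroup.isSimpleGroup_of_isCoatom {H : Type*} [Group H] {M : Subgroup H} [M.Normal]
    (hM : IsCoatom M) : IsSimpleGroup (H ⧸ M) := by
  have : IsSimpleOrder (Set.Ici M) := Set.isSimpleOrder_Ici_iff_isCoatom.mpr hM
  have : IsSimpleOrder (Subgroup (H ⧸ M)) :=
    (show Subgroup (H ⧸ M) ≃o Set.Ici M from QuotientGroup.comapMk'OrderIso M).isSimpleOrder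
  have : Nontrivial (H ⧸ M) := Subgroup.nontrivial_iff.mp inferInstance
  exact ⟨fun N _ => eq_bot_or_eq_top N⟩

lemma commutator_le_frattini {H : Type*} [Group H] [Finite H] [Group.IsNilpotent H] :
    commutator H ≤ frattini H := by
  refine le_iInf₂ fun M (hM : IsCoatom M) => ?_
  have : M.Normal :=
    NormalizerCondition.normal_of_coatom M Group.normalizerCondition_of_isNilpotent hM
  have := QuotientGroup.isSimpleGroup_of_isCoatom hM
  simpa using Abelianization.commutator_subset_ker (QuotientGroup.mk' M : H →* H ⧸ M)

abbrev frattiniQuotientCommGroup (H : Type*) [Group H] [Finite H] [Group.IsNilpotent H] :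
    CommGroup (H ⧸ frattini H) :=
  { QuotientGroup.Quotient.group (frattini H) with
    mul_comm :=
      have := Normal.quotient_commutative_iff_commutator_le.mpr (commutator_le_frattini (H := H))
      mul_comm' }

def MulAut.quotientMap {H : Type*} [Group H] (N : Subgroup H) [N.Characteristic] :
    MulAut H →* MulAut (H ⧸ N) where
  toFun e := QuotientGroup.congr N N e (characteristic_iff_map_eq.mp ‹_› e)
  map_one' := MulEquiv.ext fun z => QuotientGroup.induction_on z fun _ => rfl
  map_mul' _ _ := MulEquiv.ext fun z => QuotientGroup.induction_on z fun _ => rfl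

@[simp]
lemma MulAut.quotientMap_apply_mk {H : Type*} [Group H] (N : Subgroup H) [N.Characteristic]
    (e : MulAut H) (y : H) : quotientMap N e y = (e y : H ⧸ N) := rfl

lemma MulAut.mk_apply_of_mem_ker_quotientMap {H : Type*} [Group H] {N : Subgroup H}
    [N.Characteristic] {e : MulAut H} (he : e ∈ (quotientMap N).ker) (y : H) :
    (e y : H ⧸ N) = y := by
  rw [← quotientMap_apply_mk, MonoidHom.mem_ker.mp he, MulAut.one_apply]

def frattiniLifts (H : Type*) [Group H] :
    SubMulAction (MulAut.quotientMap (frattini H)).ker (H → H) where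
  carrier := {t | ∀ y, (t y : H ⧸ frattini H) = y}
  smul_mem' σ t ht y := (MulAut.mk_apply_of_mem_ker_quotientMap σ.2 (t y)).trans (ht y)

section Burnside

variable {H : Type*} [Group H] [Finite H]

lemma closure_range_eq_top_of_forall_mk_eq {t : H → H}
    (ht : ∀ y, (t y : H ⧸ frattini H) = y) : closure (Set.range t) = ⊤ := by
  refine frattini_nongenerating (eq_top_iff.mpr fun y _ => ?_)
  have hy : (t y)⁻¹ * y ∈ frattini H := QuotientGroup.eq.mp (ht y)
  have hty : t y ∈ closure (Set.range t) ⊔ frattini H :=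
    mem_sup_left (subset_closure (Set.mem_range_self y))
  simpa using mul_mem hty (mem_sup_right hy)

lemma stabilizer_frattiniLifts_eq_bot (t : frattiniLifts H) :
    stabilizer (MulAut.quotientMap (frattini H)).ker t = ⊥ := by
  refine eq_bot_iff.mpr fun σ hσ => ?_
  have hfix : Set.EqOn (σ : MulAut H).toMonoidHom (MonoidHom.id H) (Set.range t.1) := by
    rintro _ ⟨y, rfl⟩
    exact congrFun (congrArg Subtype.val (mem_stabilizer_iff.mp hσ)) y
  have := MonoidHom.eq_of_eqOn_dense (closure_range_eq_top_of_forall_mk_eq t.2) hfix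
  exact Subtype.ext (MulEquiv.ext fun y => DFunLike.congr_fun this y)

lemma card_frattiniLifts : Nat.card (frattiniLifts H) = Nat.card (frattini H) ^ Nat.card H := by
  rw [← Nat.card_fun]
  refine Nat.card_congr
    { toFun t y := ⟨(t.1 y)⁻¹ * y, QuotientGroup.eq.mp (t.2 y)⟩
      invFun g := ⟨fun y => y * (g y)⁻¹, fun y => QuotientGroup.eq.mpr (by simp)⟩
      left_inv t := by ext; simp
      right_inv g := by ext; simp }

theorem IsPGroup.isPGroup_ker_quotientMap_frattini {p : ℕ} [Fact p.Prime] (hH : IsPGroup p H) :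
    IsPGroup p (MulAut.quotientMap (frattini H)).ker := by
  obtain ⟨n, hn⟩ := IsPGroup.iff_card.mp (hH.to_subgroup (frattini H))
  refine IsPGroup.of_card_dvd_pow (n := n * Nat.card H) ?_
  rw [pow_mul, ← hn, ← card_frattiniLifts,
    Nat.card_congr (selfEquivOrbitsQuotientProd stabilizer_frattiniLifts_eq_bot), Nat.card_prod]
  exact dvd_mul_left _ _

lemma MulAut.eq_one_of_mem_ker_quotientMap_frattini {p : ℕ} [Fact p.Prime] (hH : IsPGroup p H)
    {σ : MulAut H} (hσ : σ ∈ (quotientMap (frattini H)).ker) (hco : p.Coprime (orderOf σ)) :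
    σ = 1 := by
  have := hH.isPGroup_ker_quotientMap_frattini.orderOf_coprime hco ⟨σ, hσ⟩
  rw [Subgroup.orderOf_mk, Nat.coprime_self] at this
  exact orderOf_eq_one_iff.mp this

end Burnside

lemma MulAut.ker_conjNormal {G : Type*} [Group G] (P : Subgroup G) [P.Normal] :
    (MulAut.conjNormal : G →* MulAut P).ker = centralizer P := by
  ext g
  simp only [MonoidHom.mem_ker, MulEquiv.ext_iff, Subtype.ext_iff, MulAut.conjNormal_apply,
    MulAut.one_apply, mem_centralizer_iff, Subtype.forall, SetLike.mem_coe]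
  refine forall₂_congr fun h _ => ?_
  rw [mul_inv_eq_iff_eq_mul, eq_comm]

lemma inf_conjS_eq_inf_centralizer {G : Type*} [Group G] {P R : Subgroup G} [P.Normal]
    (hinf : P ⊓ R = ⊥) {x : G} (hx : x ∈ P) : R ⊓ conjS x R = R ⊓ centralizer {x} := by
  ext r
  simp only [mem_inf, and_congr_right_iff, conjS, mem_map, MulEquiv.coe_toMonoidHom,
    MulAut.conj_apply, inv_inv, mem_centralizer_singleton_iff]
  intro hr
  constructor
  · rintro ⟨s, hs, rfl⟩
    have hsP : s * (x⁻¹ * s * x)⁻¹ ∈ P ⊓ R := by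
      refine mem_inf.mpr ⟨?_, mul_mem hs (inv_mem hr)⟩
      simpa [mul_assoc] using mul_mem (‹P.Normal›.conj_mem x⁻¹ (inv_mem hx) s) hx
    rw [hinf, mem_bot, mul_inv_eq_one] at hsP
    conv_rhs => rw [hsP]
    group
  · intro hc
    exact ⟨r, hr, by rw [mul_assoc, hc]; group⟩

theorem exists_mem_inf_centralizer_eq_bot {G : Type*} [Group G] [Finite G] {p : ℕ} [Fact p.Prime]
    {P R : Subgroup G} [P.Normal] [IsMulCommutative R] (hP : IsPGroup p P)
    (hR : ¬ p ∣ Nat.card R) (hCent : R ⊓ centralizer P = ⊥) :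
    ∃ x ∈ P, R ⊓ centralizer {x} = ⊥ := by
  have := hP.isNilpotent
  let _ := frattiniQuotientCommGroup P
  let c : R →* MulAut P := MulAut.conjNormal.comp R.subtype
  let _ : MulDistribMulAction R (P ⧸ frattini P) :=
    MulDistribMulAction.compHom _ ((MulAut.quotientMap (frattini P)).comp c)
  have hpR : p.Coprime (Nat.card R) := (Nat.Prime.coprime_iff_not_dvd Fact.out).mpr hR
  have hco : (Nat.card R).Coprime (Nat.card (P ⧸ frattini P)) := by
    obtain ⟨n, hn⟩ := IsPGroup.iff_card.mp (hP.to_quotient (frattini P))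
    rw [hn]
    exact (hpR.pow_left n).symm
  have hfaithful : ∀ r : R, (∀ w : P ⧸ frattini P, r • w = w) → r = 1 := by
    intro r hr
    have hcr : c r = 1 := by
      refine MulAut.eq_one_of_mem_ker_quotientMap_frattini hP (MonoidHom.mem_ker.mpr ?_) ?_
      · exact MulEquiv.ext hr
      · exact hpR.coprime_dvd_right ((orderOf_map_dvd c r).trans (orderOf_dvd_natCard r))
    have : (r : G) ∈ R ⊓ centralizer P :=
      mem_inf.mpr ⟨r.2, MulAut.ker_conjNormal P ▸ MonoidHom.mem_ker.mpr hcr⟩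
    rw [hCent, mem_bot] at this
    exact Subtype.ext this
  obtain ⟨v, hv⟩ := MulDistribMulAction.exists_forall_stabilizer_le (A := R) hco
  obtain ⟨x, rfl⟩ := QuotientGroup.mk_surjective v
  refine ⟨x, x.2, eq_bot_iff.mpr fun r hr => ?_⟩
  obtain ⟨hrR, hrx⟩ := mem_inf.mp hr
  have hfix : (⟨r, hrR⟩ : R) • (x : P ⧸ frattini P) = x := by
    refine congrArg _ (Subtype.ext ?_)
    simp [c, mem_centralizer_singleton_iff.mp hrx]
  exact mem_bot.mpr (congrArg Subtype.val (hfaithful _ fun w => hv w hfix))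

theorem stmt12_general {G : Type*} [Group G] [Finite G] (p : ℕ) (hp : p.Prime)
    (P R : Subgroup G)
    (hPnorm : P.Normal) (hPp : IsPGroup p P)
    (hinf : P ⊓ R = ⊥)
    (hRab : ∀ a ∈ R, ∀ b ∈ R, a * b = b * a)
    (hRp' : ¬ p ∣ Nat.card R)
    (hCent : R ⊓ Subgroup.centralizer (P : Set G) = ⊥) :
    ∃ x ∈ P, R ⊓ conjS x R = ⊥ := by
  have : Fact p.Prime := ⟨hp⟩
  have : IsMulCommutative R := .of_comm fun a b => Subtype.ext (hRab a a.2 b b.2)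
  obtain ⟨x, hxP, hx⟩ := exists_mem_inf_centralizer_eq_bot hPp hRp' hCent
  exact ⟨x, hxP, (inf_conjS_eq_inf_centralizer hinf hxP).trans hx⟩

/-- Let `G = P ⋊ R` with `P` a normal Sylow `p`-subgroup and `R` an abelian
p'-Hall subgroup with `C_R(P) = {e}`. Then there is `x ∈ P` with
`R ∩ R^x = {e}`. -/
theorem stmt12 {G : Type*} [Group G] [Finite G] (p : ℕ) (hp : p.Prime)
    (P R : Subgroup G)
    (hPnorm : P.Normal) (hPp : IsPGroup p P) (hPsyl : ¬ p ∣ P.index)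
    (hsup : P ⊔ R = ⊤) (hinf : P ⊓ R = ⊥)
    (hRab : ∀ a ∈ R, ∀ b ∈ R, a * b = b * a)
    (hRp' : ¬ p ∣ Nat.card R) (hRindex : ∃ k : ℕ, R.index = p ^ k)
    (hCent : R ⊓ Subgroup.centralizer (P : Set G) = ⊥) :
    ∃ x ∈ P, R ⊓ conjS x R = ⊥ :=
  stmt12_general p hp P R hPnorm hPp hinf hRab hRp' hCent
end
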